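/- arXiv:1104.1051 — 6 statements merged into one kernel-verified Lean document; each statement's English description precedes it below -/
import Mathlib

section
/- Let S : ℝ³ → ℝ³ be a linear isometry with det S = 1 and S ≠ id, let L = {v ∈ ℝ³ : S(v) = v} (which is a 1-dimensional subspace, the axis direction of the rotation S), let c ∈ ℝ³, and define s : ℝ³ → ℝ³ by s(x) = S(x) + c. Assume s has no fixed point. Then the set Ax = {x ∈ ℝ³ : s(x) − x ∈ L} is a nonempty affine line whose direction is L, and the map x ↦ s(x) − x is constant on Ax, its value being the orthogonal projection of c onto L, which is nonzero. -/
/-!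
Let `p` be the orthogonal projection of `c` onto `L`. As `S` is an isometry fixing `L`, every
displacement `S x - x` lies in `Lᗮ`, and in finite dimension these displacements fill `Lᗮ`: a
vector orthogonal to all of them is fixed by `S⁻¹`. So `s x - x = (S x - x) + (c - p) + p` has
`L`-component `p` for every `x`; it lies in `L` exactly when it equals `p`, some `x₀` achieves
this, and two such points differ by a fixed vector. Since `s` has no fixed point, `p ≠ 0`, so
`L ≠ 0`; `L` is not everything as `S ≠ id`, and a plane `L` would make `S` the reflection in
`L`, of determinant `-1`.
-/

open Module Submodule
open scoped InnerProductSpace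

lemma Submodule.eq_zero_or_eq_zero_of_inner_eq_zero_of_finrank_eq_one
    {𝕜 E : Type*} [RCLike 𝕜] [NormedAddCommGroup E] [InnerProductSpace 𝕜 E]
    {K : Submodule 𝕜 E} (hK : finrank 𝕜 K = 1) {u v : E} (hu : u ∈ K) (hv : v ∈ K)
    (huv : ⟪u, v⟫_𝕜 = 0) : u = 0 ∨ v = 0 := by
  by_cases hu0 : u = 0
  · exact .inl hu0
  obtain ⟨a, ha⟩ := (finrank_eq_one_iff_of_nonzero' (⟨u, hu⟩ : K) (by simpa using hu0)).mp hK
    ⟨v, hv⟩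
  have hva : v = a • u := by simpa using (congrArg Subtype.val ha).symm
  rw [hva, inner_smul_right, mul_eq_zero, inner_self_eq_zero] at huv
  simp [hva, huv]

namespace LinearIsometryEquiv

section RCLike

variable {𝕜 E : Type*} [RCLike 𝕜] [NormedAddCommGroup E] [InnerProductSpace 𝕜 E]
  {S : E ≃ₗᵢ[𝕜] E} {L : Submodule 𝕜 E}

lemma map_mem_orthogonal_of_fixed (hL : ∀ v, v ∈ L ↔ S v = v) {w : E} (hw : w ∈ Lᗮ) :
    S w ∈ Lᗮ := fun u hu => by
  rw [← (hL u).1 hu, inner_map_map]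
  exact hw u hu

lemma map_sub_self_mem_orthogonal_of_fixed (hL : ∀ v, v ∈ L ↔ S v = v) (x : E) :
    S x - x ∈ Lᗮ := fun u hu => by
  rw [inner_sub_right, ← inner_map_map S u x, (hL u).1 hu, sub_self]

lemma exists_map_sub_self_eq_of_fixed [FiniteDimensional 𝕜 E] (hL : ∀ v, v ∈ L ↔ S v = v)
    {q : E} (hq : q ∈ Lᗮ) : ∃ x, S x - x = q := by
  set K := LinearMap.range ((S : E →ₗ[𝕜] E) - LinearMap.id)
  have hK : Kᗮ ≤ L := by
    intro v hv
    have hinner : ∀ x, ⟪x, S.symm v - v⟫_𝕜 = 0 := fun x => by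
      have := (mem_orthogonal K v).1 hv (S x - x) ⟨x, rfl⟩
      rwa [inner_sub_left, inner_map_eq_flip, ← inner_sub_right] at this
    rw [hL, ← S.eq_symm_apply]
    exact (sub_eq_zero.1 (inner_self_eq_zero.1 (hinner _))).symm
  obtain ⟨x, hx⟩ : q ∈ K := by simpa [orthogonal_orthogonal] using orthogonal_le hK hq
  exact ⟨x, hx⟩

variable (c : E)

lemma add_sub_self_eq_starProjection_of_mem [L.HasOrthogonalProjection]
    (hL : ∀ v, v ∈ L ↔ S v = v) {x : E} (hx : S x + c - x ∈ L) :
    S x + c - x = L.starProjection c := by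
  have hperp : S x + c - x - L.starProjection c ∈ Lᗮ := by
    rw [show S x + c - x - L.starProjection c = (S x - x) + (c - L.starProjection c) by abel]
    exact Lᗮ.add_mem (map_sub_self_mem_orthogonal_of_fixed hL x)
      (L.sub_starProjection_mem_orthogonal c)
  have hmem : S x + c - x - L.starProjection c ∈ L := L.sub_mem hx (L.starProjection_apply_mem c)
  exact sub_eq_zero.1 (inner_self_eq_zero.1 (hperp _ hmem))

lemma exists_add_sub_self_eq_starProjection [FiniteDimensional 𝕜 E]
    (hL : ∀ v, v ∈ L ↔ S v = v) : ∃ x₀, S x₀ + c - x₀ = L.starProjection c := by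
  obtain ⟨x₀, hx₀⟩ := exists_map_sub_self_eq_of_fixed hL
    (Lᗮ.neg_mem (L.sub_starProjection_mem_orthogonal c))
  exact ⟨x₀, by rw [add_sub_right_comm, hx₀]; abel⟩

lemma add_sub_self_mem_iff [L.HasOrthogonalProjection] (hL : ∀ v, v ∈ L ↔ S v = v) {x₀ : E}
    (hx₀ : S x₀ + c - x₀ = L.starProjection c) (x : E) :
    S x + c - x ∈ L ↔ x - x₀ ∈ L := by
  have hdecomp : S x + c - x = (S (x - x₀) - (x - x₀)) + L.starProjection c := by
    rw [← hx₀, map_sub]; abel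
  constructor
  · intro hx
    rw [hL, ← sub_eq_zero]
    simpa [hdecomp] using add_sub_self_eq_starProjection_of_mem c hL hx
  · intro hx
    rw [hdecomp, (hL _).1 hx, sub_self, zero_add]
    exact L.starProjection_apply_mem c

end RCLike

section Real

variable {E : Type*} [NormedAddCommGroup E] [InnerProductSpace ℝ E]
  {S : E ≃ₗᵢ[ℝ] E} {L : Submodule ℝ E}

lemma map_eq_neg_of_mem_orthogonal_of_fixed (hL : ∀ v, v ∈ L ↔ S v = v)
    (h : finrank ℝ Lᗮ = 1) {w : E} (hw : w ∈ Lᗮ) : S w = -w := by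
  have horth : ⟪S w + w, S w - w⟫_ℝ = 0 := by
    rw [real_inner_add_sub_eq_zero_iff, norm_map]
  rcases eq_zero_or_eq_zero_of_inner_eq_zero_of_finrank_eq_one h
    (Lᗮ.add_mem (map_mem_orthogonal_of_fixed hL hw) hw)
    (map_sub_self_mem_orthogonal_of_fixed hL w) horth with hadd | hfix
  · exact eq_neg_of_add_eq_zero_left hadd
  · have hwL : w ∈ L := (hL w).2 (sub_eq_zero.1 hfix)
    rw [inner_self_eq_zero.1 (hw w hwL), map_zero, neg_zero]

lemma eq_reflection_of_finrank_orthogonal_eq_one [L.HasOrthogonalProjection]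
    (hL : ∀ v, v ∈ L ↔ S v = v) (h : finrank ℝ Lᗮ = 1) : S = L.reflection := by
  ext x
  obtain ⟨y, hy, z, hz, rfl⟩ := L.exists_add_mem_mem_orthogonal x
  rw [map_add, map_add, (hL y).1 hy, map_eq_neg_of_mem_orthogonal_of_fixed hL h hz,
    reflection_mem_subspace_eq_self hy, reflection_mem_subspace_orthogonalComplement_eq_neg hz]

lemma finrank_fixed_eq_one [FiniteDimensional ℝ E] (hE : finrank ℝ E = 3)
    (hdet : LinearMap.det S.toLinearEquiv.toLinearMap = 1)
    (hS : S ≠ LinearIsometryEquiv.refl ℝ E) (hL : ∀ v, v ∈ L ↔ S v = v) (hL₀ : L ≠ ⊥) :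
    finrank ℝ L = 1 := by
  have hsum : finrank ℝ L + finrank ℝ Lᗮ = 3 := by
    rw [L.finrank_add_finrank_orthogonal, hE]
  have hne0 : finrank ℝ L ≠ 0 := fun h => hL₀ (Submodule.finrank_eq_zero.mp h)
  have hne2 : finrank ℝ L ≠ 2 := fun h => by
    rw [eq_reflection_of_finrank_orthogonal_eq_one hL (by omega), det_reflection] at hdet
    norm_num [show finrank ℝ Lᗮ = 1 by omega] at hdet
  have hne3 : finrank ℝ L ≠ 3 := fun h => by
    have htop : L = ⊤ := Submodule.eq_top_of_finrank_eq (by rw [h, hE])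
    exact hS (ext fun x => (hL x).1 (htop ▸ mem_top))
  omega

end Real

end LinearIsometryEquiv

/-- Let `S` be a linear isometry of `ℝ³` with `det S = 1`, `S ≠ id`, and let
`L = {v | S v = v}` be its fixed subspace (the axis direction of the rotation `S`).
Let `s x = S x + c` be an affine map with no fixed point (a screw motion).  Then
`L` is 1-dimensional, the set `Ax = {x | s x - x ∈ L}` is a nonempty affine line with
direction `L`, and on `Ax` the map `x ↦ s x - x` is constantly equal to the orthogonal
projection of `c` onto `L`, which is nonzero. -/
theorem screw_motion_axis
    (S : EuclideanSpace ℝ (Fin 3) ≃ₗᵢ[ℝ] EuclideanSpace ℝ (Fin 3))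
    (hdet : LinearMap.det (S.toLinearEquiv.toLinearMap) = 1)
    (hS : S ≠ LinearIsometryEquiv.refl ℝ (EuclideanSpace ℝ (Fin 3)))
    (L : Submodule ℝ (EuclideanSpace ℝ (Fin 3)))
    (hL : ∀ v, v ∈ L ↔ S v = v)
    (c : EuclideanSpace ℝ (Fin 3))
    (s : EuclideanSpace ℝ (Fin 3) → EuclideanSpace ℝ (Fin 3))
    (hs : ∀ x, s x = S x + c)
    (hnofix : ∀ x, s x ≠ x) :
    Module.finrank ℝ L = 1 ∧
    (∃ x₀ ∈ {x : EuclideanSpace ℝ (Fin 3) | s x - x ∈ L},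
        {x : EuclideanSpace ℝ (Fin 3) | s x - x ∈ L} =
          (fun v => x₀ + v) '' (L : Set (EuclideanSpace ℝ (Fin 3)))) ∧
    (∀ x ∈ {x : EuclideanSpace ℝ (Fin 3) | s x - x ∈ L},
        s x - x = (Submodule.orthogonalProjectionOnto L c : EuclideanSpace ℝ (Fin 3))) ∧
    (Submodule.orthogonalProjectionOnto L c : EuclideanSpace ℝ (Fin 3)) ≠ 0 := by
  obtain rfl : s = fun x => S x + c := funext hs
  simp only [coe_orthogonalProjectionOnto_apply, Set.mem_ofPred_eq]
  obtain ⟨x₀, hx₀⟩ := S.exists_add_sub_self_eq_starProjection c hL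
  have hp : L.starProjection c ≠ 0 := fun h => hnofix x₀ (sub_eq_zero.1 (hx₀.trans h))
  have hL₀ : L ≠ ⊥ := fun h => hp (by simp [h])
  refine ⟨S.finrank_fixed_eq_one finrank_euclideanSpace_fin hdet hS hL hL₀,
    ⟨x₀, hx₀ ▸ L.starProjection_apply_mem c, ?_⟩,
    fun x hx => S.add_sub_self_eq_starProjection_of_mem c hL hx, hp⟩
  ext x
  rw [Set.mem_ofPred_eq, S.add_sub_self_mem_iff c hL hx₀]
  exact ⟨fun hx => ⟨x - x₀, hx, add_sub_cancel x₀ x⟩, by rintro ⟨v, hv, rfl⟩; simpa using hv⟩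
end

section
/- Let a, b > 0 and consider the right tetrahedron with vertices A = (0,0,0), B = (a,0,0), C = (0,b,0), D = (0,0,1) in ℝ³. Let s_a, s_b, s_c, s_d be the orthogonal affine reflections across the affine planes spanned by {B,C,D}, {A,C,D}, {A,B,D}, {A,B,C} respectively, and let s = s_a ∘ s_d ∘ s_c ∘ s_b. Then the linear part of s equals −S_a, where S_a is the linear orthogonal reflection across the plane through the origin with normal vector n = (b, a, ab); moreover s(A) = s_a(A), so that s(A) − A is a nonzero scalar multiple of n. In particular, the vertex A lies on the axis {x ∈ ℝ³ : s(x) − x ∈ ℝ·n} of the screw motion s. -/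
/-! The face `BCD` has normal `(C - B) × (D - B) = n`, while the other three faces are the
coordinate planes through `A = 0`; reflections in three mutually orthogonal planes through `A`
compose to `x ↦ -x`. Hence `s x = S_a (-x - B) + B`, so the linear part of `s` is `-S_a`,
`s A = S_a (-B) + B = s_a A`, and `s A - A = B - S_a B = (2 ⟪n, B⟫ / ‖n‖²) • n` with
`⟪n, B⟫ = ab ≠ 0`. -/

noncomputable section

/-- The orthogonal affine reflection of `ℝ³` across the affine plane spanned by three
points `p, q, r`. -/
def faceRefl (p q r : EuclideanSpace ℝ (Fin 3)) :
    EuclideanSpace ℝ (Fin 3) ≃ᵃⁱ[ℝ] EuclideanSpace ℝ (Fin 3) :=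
  EuclideanGeometry.reflection (affineSpan ℝ {p, q, r})

open EuclideanGeometry RealInnerProductSpace Matrix

local notation "E³" => EuclideanSpace ℝ (Fin 3)

theorem Submodule.reflection_orthogonal_span_singleton_apply {E : Type*} [NormedAddCommGroup E]
    [InnerProductSpace ℝ E] (w v : E) :
    (ℝ ∙ w)ᗮ.reflection v = v - (2 * ⟪w, v⟫ / ‖w‖ ^ 2) • w := by
  rw [reflection_orthogonal_apply, reflection_singleton_apply]
  simp only [RCLike.ofReal_real_eq_id, id]
  module

theorem EuclideanSpace.reflection_orthogonal_single_apply {ι : Type*} [Fintype ι] [DecidableEq ι]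
    (i : ι) {c : ℝ} (hc : c ≠ 0) (x : EuclideanSpace ℝ ι) (j : ι) :
    (ℝ ∙ EuclideanSpace.single i c)ᗮ.reflection x j = if j = i then -x j else x j := by
  rw [Submodule.reflection_orthogonal_span_singleton_apply, EuclideanSpace.inner_single_left,
    PiLp.norm_single, Real.norm_eq_abs, sq_abs]
  by_cases hj : j = i
  · subst hj
    simp only [Real.ringHom_apply, PiLp.sub_apply, PiLp.smul_apply, PiLp.single_eq_same,
      smul_eq_mul, ↓reduceIte]
    field_simp
    ring
  · simp [hj]

theorem vectorSpan_triple {k V P : Type*} [Ring k] [AddCommGroup V] [Module k V] [AddTorsor V P]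
    (p q r : P) : vectorSpan k ({p, q, r} : Set P) = Submodule.span k {q -ᵥ p, r -ᵥ p} := by
  simp [vectorSpan_eq_span_vsub_set_right k (Set.mem_insert p _), Set.image_insert_eq,
    Submodule.span_insert_zero]

def euclideanCross (u v : E³) : E³ := WithLp.toLp 2 (u.ofLp ⨯₃ v.ofLp)

theorem inner_euclideanCross_left (u v : E³) : ⟪u, euclideanCross u v⟫ = 0 := by
  simp [EuclideanSpace.inner_eq_star_dotProduct, euclideanCross, dotProduct_comm, dot_self_cross]

theorem inner_euclideanCross_right (u v : E³) : ⟪v, euclideanCross u v⟫ = 0 := by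
  simp [EuclideanSpace.inner_eq_star_dotProduct, euclideanCross, dotProduct_comm, dot_cross_self]

theorem span_pair_eq_orthogonal_euclideanCross {u v : E³} (h : euclideanCross u v ≠ 0) :
    Submodule.span ℝ {u, v} = (ℝ ∙ euclideanCross u v)ᗮ := by
  have hind : LinearIndependent ℝ ![u, v] := by
    refine .of_comp (WithLp.linearEquiv 2 ℝ (Fin 3 → ℝ)).toLinearMap ?_
    have hcross : u.ofLp ⨯₃ v.ofLp ≠ 0 := fun h0 => h (by simp [euclideanCross, h0])
    have hcomp : ⇑(WithLp.linearEquiv 2 ℝ (Fin 3 → ℝ)).toLinearMap ∘ ![u, v] =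
        ![u.ofLp, v.ofLp] := by
      ext i : 1; fin_cases i <;> rfl
    rw [hcomp]
    exact crossProduct_ne_zero_iff_linearIndependent.mp hcross
  have : Fact (Module.finrank ℝ E³ = 2 + 1) := ⟨by simp⟩
  refine Submodule.eq_of_le_of_finrank_eq ?_ ?_
  · rw [Submodule.span_le]
    rintro x (rfl | rfl) <;> rw [SetLike.mem_coe, Submodule.mem_orthogonal_singleton_iff_inner_left]
    exacts [inner_euclideanCross_left x v, inner_euclideanCross_right u x]
  · rw [Submodule.finrank_orthogonal_span_singleton (n := 2) h,
      ← Matrix.range_cons_cons_empty u v ![], finrank_span_eq_card hind, Fintype.card_fin]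

theorem faceRefl_apply {p q r : E³} (h : euclideanCross (q - p) (r - p) ≠ 0) (x : E³) :
    faceRefl p q r x = (ℝ ∙ euclideanCross (q - p) (r - p))ᗮ.reflection (x - p) + p := by
  have hp : p ∈ affineSpan ℝ {p, q, r} := mem_affineSpan ℝ (Set.mem_insert p _)
  have hdir :
      (affineSpan ℝ {p, q, r}).direction = (ℝ ∙ euclideanCross (q - p) (r - p))ᗮ := by
    rw [direction_affineSpan, vectorSpan_triple, vsub_eq_sub, vsub_eq_sub,
      span_pair_eq_orthogonal_euclideanCross h]
  rw [faceRefl, reflection_apply_of_mem _ x hp]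
  simp only [hdir]
  rfl

theorem faceRefl_zero_apply {q r : E³} (h : euclideanCross q r ≠ 0) (x : E³) :
    faceRefl 0 q r x = (ℝ ∙ euclideanCross q r)ᗮ.reflection x := by
  simpa using faceRefl_apply (p := 0) (by simpa using h) x

theorem faceRefl_coordinatePlanes_comp_eq_neg {a b : ℝ} (ha : a ≠ 0) (hb : b ≠ 0) (x : E³) :
    faceRefl 0 !₂[a, 0, 0] !₂[0, b, 0] (faceRefl 0 !₂[a, 0, 0] !₂[0, 0, 1]
      (faceRefl 0 !₂[0, b, 0] !₂[0, 0, 1] x)) = -x := by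
  have h₀ : euclideanCross !₂[0, b, 0] !₂[0, 0, 1] = EuclideanSpace.single 0 b := by
    ext i; fin_cases i <;> simp [euclideanCross, cross_apply]
  have h₁ : euclideanCross !₂[a, 0, 0] !₂[0, 0, 1] = EuclideanSpace.single 1 (-a) := by
    ext i; fin_cases i <;> simp [euclideanCross, cross_apply]
  have h₂ : euclideanCross !₂[a, 0, 0] !₂[0, b, 0] = EuclideanSpace.single 2 (a * b) := by
    ext i; fin_cases i <;> simp [euclideanCross, cross_apply]
  rw [faceRefl_zero_apply (by simp [h₂, ha, hb]), faceRefl_zero_apply (by simp [h₁, ha]),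
    faceRefl_zero_apply (by simp [h₀, hb]), h₀, h₁, h₂]
  ext j
  fin_cases j <;> simp [EuclideanSpace.reflection_orthogonal_single_apply, ha, hb]

/-- In the right tetrahedron `A = (0,0,0)`, `B = (a,0,0)`, `C = (0,b,0)`, `D = (0,0,1)`
(`a, b > 0`), with `s = s_a ∘ s_d ∘ s_c ∘ s_b` the composition of the affine reflections
across the faces opposite `A, D, C, B`, the linear part of `s` is `-S_a` where `S_a` is
the linear orthogonal reflection across the plane through the origin with normal
`n = (b, a, ab)`; moreover `s A = s_a A`, so `s A - A` is a nonzero multiple of `n` and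
the vertex `A` lies on the axis `{x | s x - x ∈ ℝ·n}` of the screw motion `s`. -/
theorem right_tetrahedron_fagnano_through_vertex (a b : ℝ) (ha : 0 < a) (hb : 0 < b) :
    let A : EuclideanSpace ℝ (Fin 3) := !₂[0, 0, 0]
    let B : EuclideanSpace ℝ (Fin 3) := !₂[a, 0, 0]
    let C : EuclideanSpace ℝ (Fin 3) := !₂[0, b, 0]
    let D : EuclideanSpace ℝ (Fin 3) := !₂[0, 0, 1]
    let n : EuclideanSpace ℝ (Fin 3) := !₂[b, a, a * b]
    let Sa : EuclideanSpace ℝ (Fin 3) ≃ₗᵢ[ℝ] EuclideanSpace ℝ (Fin 3) :=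
      Submodule.reflection (Submodule.span ℝ {n})ᗮ
    let s : EuclideanSpace ℝ (Fin 3) ≃ᵃⁱ[ℝ] EuclideanSpace ℝ (Fin 3) :=
      (((faceRefl A C D).trans (faceRefl A B D)).trans (faceRefl A B C)).trans
        (faceRefl B C D)
    (∀ v : EuclideanSpace ℝ (Fin 3), s.linearIsometryEquiv v = -(Sa v)) ∧
    s A = faceRefl B C D A ∧
    (∃ k : ℝ, k ≠ 0 ∧ s A - A = k • n) ∧
    A ∈ {x : EuclideanSpace ℝ (Fin 3) | ∃ k : ℝ, s x - x = k • n} := by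
  intro A B C D n Sa s
  have hA : A = 0 := by ext i; fin_cases i <;> rfl
  have hn : euclideanCross (C - B) (D - B) = n := by
    ext i; fin_cases i <;> simp [B, C, D, n, euclideanCross, cross_apply, mul_comm]
  have hn₀ : n ≠ 0 := fun h => hb.ne' (congrArg (· 0) h)
  have hsa (x : E³) : faceRefl B C D x = Sa (x - B) + B := by
    rw [faceRefl_apply (hn ▸ hn₀), hn]
  have hs (x : E³) : s x = Sa (-x - B) + B := by
    change faceRefl B C D (faceRefl A B C (faceRefl A B D (faceRefl A C D x))) = _
    rw [hA, faceRefl_coordinatePlanes_comp_eq_neg ha.ne' hb.ne', hsa]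
  have hk : s A - A = (2 * (a * b) / ‖n‖ ^ 2) • n := by
    rw [hs, hA, neg_zero, zero_sub, sub_zero, map_neg,
      Submodule.reflection_orthogonal_span_singleton_apply]
    simp [n, B, EuclideanSpace.inner_eq_star_dotProduct]
  refine ⟨fun v => ?_, by rw [hs, hsa, hA, neg_zero], ⟨_, ?_, hk⟩, ⟨_, hk⟩⟩
  · have hlin := s.map_vadd A v
    rw [hA, vadd_eq_add, add_zero, vadd_eq_add] at hlin
    rw [eq_sub_of_add_eq hlin.symm, hs, hs, map_sub, map_sub, map_neg, map_neg, map_zero]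
    abel
  · have hn_pos := norm_pos_iff.mpr hn₀
    positivity
end
end

section
/- Consider the tetrahedron with vertices A = (0,0,0), B = (2,0,0), C = (1,1,0), D = (3,2,1) in ℝ³, and let s = s_a ∘ s_d ∘ s_c ∘ s_b be the composition of the orthogonal affine reflections across the planes of the faces opposite a = A, b = B, c = C, d = D. Then the unique point x of the affine plane spanned by {B, C, D} (the plane x₁ + x₂ − 3x₃ = 2) such that s(x) − x is a scalar multiple of (9, 4, 8) is the point m = (22/161, 6/23, −86/161); since the third coordinate of m is negative while every point of the triangle BCD has third coordinate in [0,1], m does not belong to the convex hull of {B, C, D}. -/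
/-!
Each face plane is a level set `⟪x, n⟫ = d`, in which the reflection is
`x ↦ x - 2 ((⟪x, n⟫ - d) / ⟪n, n⟫) • n`. Composing the four reflections writes `s` as an explicit
affine map, so on the plane of `BCD` the condition `s x - x ∈ ℝ • (9, 4, 8)` is a linear system
whose only solution is `m`. The third coordinate lies in `[0, 1]` at `B, C, D`, hence on the whole
triangle, but is negative at `m`.
-/

noncomputable section

open EuclideanGeometry
open scoped RealInnerProductSpace

local notation "E3" => EuclideanSpace ℝ (Fin 3)

section Hyperplane

variable {V : Type*} [NormedAddCommGroup V] [InnerProductSpace ℝ V]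

theorem reflection_eq_sub_smul_of_coe_eq_hyperplane (s : AffineSubspace ℝ V) [Nonempty s]
    [s.direction.HasOrthogonalProjection] {n : V} {d : ℝ}
    (hs : (s : Set V) = {x | ⟪x, n⟫ = d}) (x : V) :
    reflection s x = x - (2 * ((⟪x, n⟫ - d) / ⟪n, n⟫)) • n := by
  have hmem : ∀ y, y ∈ s ↔ ⟪y, n⟫ = d := fun y => Set.ext_iff.mp hs y
  obtain ⟨p, hp⟩ := ‹Nonempty s›
  by_cases hn : n = 0
  · subst hn
    have hd : d = 0 := by simpa using ((hmem p).mp hp).symm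
    simpa [reflection_eq_self_iff, hmem] using hd.symm
  set c := (⟪x, n⟫ - d) / ⟪n, n⟫
  have hfoot : x - c • n ∈ s := by
    have hnn : ⟪n, n⟫ ≠ 0 := inner_self_ne_zero.mpr hn
    rw [hmem, inner_sub_left, real_inner_smul_left, div_mul_cancel₀ _ hnn]
    ring
  have hnormal : c • n ∈ s.directionᗮ := by
    refine Submodule.smul_mem _ _ ((Submodule.mem_orthogonal' _ _).mpr fun v hv => ?_)
    have hvp := (hmem _).mp (AffineSubspace.vadd_mem_of_mem_direction hv hp)
    rw [vadd_eq_add, inner_add_left, (hmem p).mp hp] at hvp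
    rw [real_inner_comm]
    linarith
  calc reflection s x = reflection s (c • n +ᵥ (x - c • n)) := by
        rw [vadd_eq_add, add_sub_cancel]
    _ = -(c • n) +ᵥ (x - c • n) := reflection_orthogonal_vadd hfoot hnormal
    _ = x - (2 * c) • n := by rw [vadd_eq_add]; module

theorem coe_affineSpan_triple_eq_hyperplane {p q r n : V} {d : ℝ}
    (hpqr : ∀ v ∈ ({p, q, r} : Set V), ⟪v, n⟫ = d)
    (hcover : ∀ x, ⟪x, n⟫ = d → ∃ t u : ℝ, x = t • (q - p) + u • (r - p) + p) :
    (affineSpan ℝ {p, q, r} : Set V) = {x | ⟪x, n⟫ = d} := by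
  ext x
  constructor
  · intro hx
    refine affineSpan_induction hx hpqr ?_
    intro c u v w hu hv hw
    simp only [Set.mem_ofPred_eq, vsub_eq_sub, vadd_eq_add, inner_add_left, inner_sub_left,
      real_inner_smul_left] at hu hv hw ⊢
    rw [hu, hv, hw]
    ring
  · intro hx
    obtain ⟨t, u, rfl⟩ := hcover x hx
    have hp' : p ∈ affineSpan ℝ {p, q, r} := mem_affineSpan ℝ (by simp)
    have hq' : q ∈ affineSpan ℝ {p, q, r} := mem_affineSpan ℝ (by simp)
    have hr' : r ∈ affineSpan ℝ {p, q, r} := mem_affineSpan ℝ (by simp)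
    exact AffineSubspace.vadd_mem_of_mem_direction
      (add_mem (Submodule.smul_mem _ _ (AffineSubspace.vsub_mem_direction hq' hp'))
        (Submodule.smul_mem _ _ (AffineSubspace.vsub_mem_direction hr' hp'))) hp'

end Hyperplane

theorem EuclideanSpace.inner_vec3_right (x : E3) (a b c : ℝ) :
    ⟪x, !₂[a, b, c]⟫ = a * x 0 + b * x 1 + c * x 2 := by
  simp [PiLp.inner_apply, Fin.sum_univ_three]

open EuclideanSpace

theorem coe_affineSpan_BCD :
    (affineSpan ℝ ({!₂[2, 0, 0], !₂[1, 1, 0], !₂[3, 2, 1]} : Set E3) : Set E3) =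
      {x | ⟪x, !₂[1, 1, -3]⟫ = 2} :=
  coe_affineSpan_triple_eq_hyperplane (by norm_num [inner_vec3_right, Matrix.cons_val_two])
    fun x hx => ⟨x 1 - 2 * x 2, x 2, by
      rw [inner_vec3_right] at hx
      ext i
      fin_cases i <;>
        simp only [Fin.isValue, Fin.zero_eta, Fin.mk_one, Fin.reduceFinMk, Matrix.cons_val_zero,
          Matrix.cons_val_one, Matrix.cons_val, PiLp.add_apply, PiLp.sub_apply, PiLp.smul_apply,
          smul_eq_mul] <;>
        linarith⟩

theorem coe_affineSpan_ACD :
    (affineSpan ℝ ({!₂[0, 0, 0], !₂[1, 1, 0], !₂[3, 2, 1]} : Set E3) : Set E3) =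
      {x | ⟪x, !₂[1, -1, -1]⟫ = 0} :=
  coe_affineSpan_triple_eq_hyperplane (by norm_num [inner_vec3_right, Matrix.cons_val_two])
    fun x hx => ⟨x 1 - 2 * x 2, x 2, by
      rw [inner_vec3_right] at hx
      ext i
      fin_cases i <;>
        simp only [Fin.isValue, Fin.zero_eta, Fin.mk_one, Fin.reduceFinMk, Matrix.cons_val_zero,
          Matrix.cons_val_one, Matrix.cons_val, PiLp.add_apply, PiLp.sub_apply, PiLp.smul_apply,
          smul_eq_mul] <;>
        linarith⟩

theorem coe_affineSpan_ABD :
    (affineSpan ℝ ({!₂[0, 0, 0], !₂[2, 0, 0], !₂[3, 2, 1]} : Set E3) : Set E3) =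
      {x | ⟪x, !₂[0, 1, -2]⟫ = 0} :=
  coe_affineSpan_triple_eq_hyperplane (by norm_num [inner_vec3_right, Matrix.cons_val_two])
    fun x hx => ⟨(x 0 - 3 * x 2) / 2, x 2, by
      rw [inner_vec3_right] at hx
      ext i
      fin_cases i <;>
        simp only [Fin.isValue, Fin.zero_eta, Fin.mk_one, Fin.reduceFinMk, Matrix.cons_val_zero,
          Matrix.cons_val_one, Matrix.cons_val, PiLp.add_apply, PiLp.sub_apply, PiLp.smul_apply,
          smul_eq_mul] <;>
        linarith⟩

theorem coe_affineSpan_ABC :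
    (affineSpan ℝ ({!₂[0, 0, 0], !₂[2, 0, 0], !₂[1, 1, 0]} : Set E3) : Set E3) =
      {x | ⟪x, !₂[0, 0, 1]⟫ = 0} :=
  coe_affineSpan_triple_eq_hyperplane (by norm_num [inner_vec3_right, Matrix.cons_val_two])
    fun x hx => ⟨(x 0 - x 1) / 2, x 1, by
      rw [inner_vec3_right] at hx
      ext i
      fin_cases i <;>
        simp only [Fin.isValue, Fin.zero_eta, Fin.mk_one, Fin.reduceFinMk, Matrix.cons_val_zero,
          Matrix.cons_val_one, Matrix.cons_val, PiLp.add_apply, PiLp.sub_apply, PiLp.smul_apply,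
          smul_eq_mul] <;>
        linarith⟩

def fagnanoScrew : E3 ≃ᵃⁱ[ℝ] E3 :=
  (((faceRefl !₂[0, 0, 0] !₂[1, 1, 0] !₂[3, 2, 1]).trans
    (faceRefl !₂[0, 0, 0] !₂[2, 0, 0] !₂[3, 2, 1])).trans
    (faceRefl !₂[0, 0, 0] !₂[2, 0, 0] !₂[1, 1, 0])).trans
    (faceRefl !₂[2, 0, 0] !₂[1, 1, 0] !₂[3, 2, 1])

theorem fagnanoScrew_apply (x : E3) :
    fagnanoScrew x =
      !₂[x 0 / 33 + 8 * x 1 / 33 + 32 * x 2 / 33 + 4 / 11,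
        104 * x 0 / 165 - 25 * x 1 / 33 + 28 * x 2 / 165 + 4 / 11,
        128 * x 0 / 165 + 20 * x 1 / 33 - 29 * x 2 / 165 - 12 / 11] := by
  simp only [fagnanoScrew, AffineIsometryEquiv.coe_trans, Function.comp_apply, faceRefl]
  rw [reflection_eq_sub_smul_of_coe_eq_hyperplane _ coe_affineSpan_ACD,
    reflection_eq_sub_smul_of_coe_eq_hyperplane _ coe_affineSpan_ABD,
    reflection_eq_sub_smul_of_coe_eq_hyperplane _ coe_affineSpan_ABC,
    reflection_eq_sub_smul_of_coe_eq_hyperplane _ coe_affineSpan_BCD]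
  simp only [inner_vec3_right]
  ext i
  fin_cases i <;>
    simp only [Fin.isValue, Fin.zero_eta, Fin.mk_one, Fin.reduceFinMk, Matrix.cons_val_zero,
      Matrix.cons_val_one, Matrix.cons_val, PiLp.sub_apply, PiLp.smul_apply, smul_eq_mul] <;>
    ring

theorem fagnanoScrew_sub_self_eq_smul_iff {x : E3} (hx : ⟪x, !₂[1, 1, -3]⟫ = 2) :
    (∃ k : ℝ, fagnanoScrew x - x = k • !₂[9, 4, 8]) ↔ x = !₂[22 / 161, 6 / 23, -86 / 161] := by
  rw [inner_vec3_right] at hx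
  constructor
  · rintro ⟨k, hk⟩
    rw [fagnanoScrew_apply] at hk
    have h0 := congrArg (· 0) hk
    have h1 := congrArg (· 1) hk
    have h2 := congrArg (· 2) hk
    simp only [Fin.isValue, Matrix.cons_val_zero, Matrix.cons_val_one, Matrix.cons_val,
      PiLp.sub_apply, PiLp.smul_apply, smul_eq_mul] at h0 h1 h2
    ext i
    fin_cases i <;> simp only [Fin.isValue, Fin.zero_eta, Fin.mk_one, Fin.reduceFinMk,
      Matrix.cons_val_zero, Matrix.cons_val_one, Matrix.cons_val] <;> linarith
  · rintro rfl
    refine ⟨-4 / 161, ?_⟩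
    rw [fagnanoScrew_apply]
    ext i
    fin_cases i <;> norm_num [Matrix.cons_val_two]

/-- For the tetrahedron `A = (0,0,0)`, `B = (2,0,0)`, `C = (1,1,0)`, `D = (3,2,1)` and
`s = s_a ∘ s_d ∘ s_c ∘ s_b` the composition of the affine reflections across the faces
opposite `A, D, C, B`, the unique point `x` of the affine plane spanned by `{B, C, D}`
(the plane `x₀ + x₁ - 3 x₂ = 2`) such that `s x - x` is a scalar multiple of `(9,4,8)` is
`m = (22/161, 6/23, -86/161)`; since its third coordinate is negative while every point of
the triangle `BCD` has third coordinate in `[0,1]`, `m` is not in the convex hull of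
`{B, C, D}`: Fagnano's orbit does not exist in this obtuse tetrahedron. -/
theorem obtuse_tetrahedron_no_fagnano_orbit :
    let A : EuclideanSpace ℝ (Fin 3) := !₂[0, 0, 0]
    let B : EuclideanSpace ℝ (Fin 3) := !₂[2, 0, 0]
    let C : EuclideanSpace ℝ (Fin 3) := !₂[1, 1, 0]
    let D : EuclideanSpace ℝ (Fin 3) := !₂[3, 2, 1]
    let s : EuclideanSpace ℝ (Fin 3) ≃ᵃⁱ[ℝ] EuclideanSpace ℝ (Fin 3) :=
      (((faceRefl A C D).trans (faceRefl A B D)).trans (faceRefl A B C)).trans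
        (faceRefl B C D)
    let u : EuclideanSpace ℝ (Fin 3) := !₂[9, 4, 8]
    let m : EuclideanSpace ℝ (Fin 3) := !₂[22 / 161, 6 / 23, -86 / 161]
    (affineSpan ℝ ({B, C, D} : Set (EuclideanSpace ℝ (Fin 3))) : Set (EuclideanSpace ℝ (Fin 3))) =
      {x : EuclideanSpace ℝ (Fin 3) | x 0 + x 1 - 3 * x 2 = 2} ∧
    m ∈ affineSpan ℝ ({B, C, D} : Set (EuclideanSpace ℝ (Fin 3))) ∧
    (∃ k : ℝ, s m - m = k • u) ∧
    (∀ x ∈ affineSpan ℝ ({B, C, D} : Set (EuclideanSpace ℝ (Fin 3))),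
      (∃ k : ℝ, s x - x = k • u) → x = m) ∧
    m 2 < 0 ∧
    (∀ x ∈ convexHull ℝ ({B, C, D} : Set (EuclideanSpace ℝ (Fin 3))),
      x 2 ∈ Set.Icc (0 : ℝ) 1) ∧
    m ∉ convexHull ℝ ({B, C, D} : Set (EuclideanSpace ℝ (Fin 3))) := by
  intro A B C D s u m
  have hplane (x : E3) : x ∈ affineSpan ℝ ({B, C, D} : Set E3) ↔ ⟪x, !₂[1, 1, -3]⟫ = 2 :=
    Set.ext_iff.mp coe_affineSpan_BCD x
  have hm : m ∈ affineSpan ℝ ({B, C, D} : Set E3) :=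
    (hplane m).mpr (by norm_num [m, inner_vec3_right, Matrix.cons_val_two])
  have hfixed (x : E3) (hx : x ∈ affineSpan ℝ ({B, C, D} : Set E3)) :
      (∃ k : ℝ, s x - x = k • u) ↔ x = m :=
    fagnanoScrew_sub_self_eq_smul_iff ((hplane x).mp hx)
  have hm2 : m 2 < 0 := by norm_num [m, Matrix.cons_val_two]
  have hhull : ∀ x ∈ convexHull ℝ ({B, C, D} : Set E3), x 2 ∈ Set.Icc (0 : ℝ) 1 := by
    refine fun x hx => convexHull_min ?_
      ((convex_Icc 0 1).linear_preimage (PiLp.projₗ (𝕜 := ℝ) 2 (fun _ : Fin 3 => ℝ) 2)) hx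
    rintro y (rfl | rfl | rfl) <;> norm_num [B, C, D, Matrix.cons_val_two]
  refine ⟨?_, hm, (hfixed m hm).mpr rfl, fun x hx => (hfixed x hx).mp, hm2, hhull,
    fun h => (hhull m h).1.not_gt hm2⟩
  ext x
  rw [SetLike.mem_coe, hplane, inner_vec3_right]
  simp only [Set.mem_ofPred_eq]
  ring_nf
end
end

section
/- Let A be the real 2×2 matrix A = (1/81)·[[−83, 28], [−12, −75]]. Then det A = 1, trace A = −158/81, (trace A)² < 4 so that A has no real eigenvalue, and there exists a symmetric positive definite 2×2 matrix Q with Aᵀ Q A = Q (hence every orbit of the linear map V ↦ A·V lies on an ellipse). -/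
open Matrix

/-!
A real eigenvalue of a `2 × 2` matrix `M` is a root of `X² - (tr M) X + det M`, which has none
when `(tr M)² < 4 det M`. For the invariant ellipse, `v ↦ det [v, M v]` is a quadratic form that
`M` multiplies by `det M`, since `det [M v, M w] = det M · det [v, w]`; when `(tr M)² < 4 det M`
this form is definite, and here `det A = 1`.
-/

namespace Matrix

theorem eval_charpoly_eq_zero_of_mulVec_eq_smul {K n : Type*} [Field K] [Fintype n]
    [DecidableEq n] {M : Matrix n n K} {μ : K} {v : n → K} (hv : v ≠ 0) (h : M *ᵥ v = μ • v) :
    M.charpoly.eval μ = 0 := by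
  rw [eval_charpoly, ← exists_mulVec_eq_zero_iff]
  exact ⟨v, hv, by simp [sub_mulVec, h]⟩

theorem not_exists_mulVec_eq_smul_of_trace_sq_lt {K : Type*} [Field K] [LinearOrder K]
    [IsStrictOrderedRing K] {M : Matrix (Fin 2) (Fin 2) K} (h : M.trace ^ 2 < 4 * M.det) :
    ¬∃ (μ : K) (v : Fin 2 → K), v ≠ 0 ∧ M *ᵥ v = μ • v := by
  rintro ⟨μ, v, hv, hMv⟩
  have hroot := eval_charpoly_eq_zero_of_mulVec_eq_smul hv hMv
  simp only [charpoly_fin_two, Polynomial.eval_add, Polynomial.eval_sub, Polynomial.eval_pow,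
    Polynomial.eval_mul, Polynomial.eval_C, Polynomial.eval_X] at hroot
  nlinarith [sq_nonneg (2 * μ - M.trace)]

variable {R : Type*} [CommRing R]

/-- `vᵀ areaForm w = det [v, w]`. -/
def areaForm : Matrix (Fin 2) (Fin 2) R := !![0, 1; -1, 0]

theorem transpose_mul_areaForm_mul (M : Matrix (Fin 2) (Fin 2) R) :
    Mᵀ * areaForm * M = M.det • areaForm := by
  ext i j
  fin_cases i <;> fin_cases j <;>
    simp [areaForm, det_fin_two, mul_apply, Fin.sum_univ_two] <;> ring

/-- `vᵀ (invariantForm M) v = 2 det [v, M v]`. -/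
def invariantForm (M : Matrix (Fin 2) (Fin 2) R) : Matrix (Fin 2) (Fin 2) R :=
  areaForm * M + (areaForm * M)ᵀ

theorem invariantForm_isSymm (M : Matrix (Fin 2) (Fin 2) R) : (invariantForm M).IsSymm := by
  simp [invariantForm, IsSymm, add_comm]

theorem transpose_mul_invariantForm_mul (M : Matrix (Fin 2) (Fin 2) R) :
    Mᵀ * invariantForm M * M = M.det • invariantForm M := by
  have hJ : (areaForm : Matrix (Fin 2) (Fin 2) R)ᵀ = -areaForm := by
    ext i j; fin_cases i <;> fin_cases j <;> simp [areaForm]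
  have key := transpose_mul_areaForm_mul M
  simp only [invariantForm, transpose_mul, hJ]
  calc Mᵀ * (areaForm * M + Mᵀ * -areaForm) * M
      = (Mᵀ * areaForm * M) * M - Mᵀ * (Mᵀ * areaForm * M) := by noncomm_ring
    _ = M.det • (areaForm * M + Mᵀ * -areaForm) := by
      rw [key, Matrix.smul_mul, Matrix.mul_smul, mul_neg]; module

theorem invariantForm_eq (M : Matrix (Fin 2) (Fin 2) R) :
    invariantForm M = !![2 * M 1 0, M 1 1 - M 0 0; M 1 1 - M 0 0, -2 * M 0 1] := by
  rw [invariantForm, areaForm, eta_fin_two M]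
  ext i j; fin_cases i <;> fin_cases j <;> simp <;> ring

theorem det_invariantForm (M : Matrix (Fin 2) (Fin 2) R) :
    (invariantForm M).det = 4 * M.det - M.trace ^ 2 := by
  rw [invariantForm_eq, det_fin_two_of, det_fin_two, trace_fin_two]; ring

theorem posDef_of_fin_two {Q : Matrix (Fin 2) (Fin 2) ℝ} (hQ : Q.IsSymm) (h00 : 0 < Q 0 0)
    (hdet : 0 < Q.det) : Q.PosDef := by
  have h10 : Q 1 0 = Q 0 1 := hQ.apply 0 1
  refine posDef_iff_dotProduct_mulVec.mpr ⟨isHermitian_iff_isSymm.mpr hQ, fun x hx => ?_⟩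
  have hx' : x 0 ≠ 0 ∨ x 1 ≠ 0 := by
    by_contra! h0
    exact hx (by ext i; fin_cases i <;> simp [h0])
  simp only [star_trivial, dotProduct, mulVec, Fin.sum_univ_two, h10]
  rw [det_fin_two, h10] at hdet
  have hsq : Q 0 0 * (x 0 * (Q 0 0 * x 0 + Q 0 1 * x 1) + x 1 * (Q 0 1 * x 0 + Q 1 1 * x 1))
      = (Q 0 0 * x 0 + Q 0 1 * x 1) ^ 2 + (Q 0 0 * Q 1 1 - Q 0 1 * Q 0 1) * x 1 ^ 2 := by ring
  refine pos_of_mul_pos_right (hsq ▸ ?_) h00.le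
  rcases eq_or_ne (x 1) 0 with h1 | h1
  · have h0 : x 0 ≠ 0 := hx'.resolve_right (not_not.mpr h1)
    simp only [h1, mul_zero, add_zero, zero_pow two_ne_zero]
    positivity
  · positivity

theorem posDef_neg_invariantForm {M : Matrix (Fin 2) (Fin 2) ℝ} (h10 : M 1 0 < 0)
    (h : M.trace ^ 2 < 4 * M.det) : (-invariantForm M).PosDef := by
  refine posDef_of_fin_two (invariantForm_isSymm M).neg ?_ ?_
  · simp only [invariantForm_eq, neg_apply, of_apply, cons_val', cons_val_zero, empty_val',
      cons_val_fin_one]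
    linarith
  · rw [det_neg, det_invariantForm, Fintype.card_fin]
    linarith

end Matrix

/-- The matrix `A = (1/81)·[[-83, 28], [-12, -75]]` (the linear part of the first return
map of the billiard beam `(abcd)^∞` in the regular tetrahedron) has determinant `1`,
trace `-158/81` with `(tr A)² < 4`, hence no real eigenvalue, and preserves a positive
definite symmetric quadratic form `Q` (so every orbit of `V ↦ A · V` lies on an ellipse). -/
theorem return_map_matrix_elliptic :
    let A : Matrix (Fin 2) (Fin 2) ℝ := (1 / 81 : ℝ) • !![-83, 28; -12, -75]
    A.det = 1 ∧
    A.trace = -158 / 81 ∧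
    A.trace ^ 2 < 4 ∧
    (¬∃ (μ : ℝ) (v : Fin 2 → ℝ), v ≠ 0 ∧ A.mulVec v = μ • v) ∧
    ∃ Q : Matrix (Fin 2) (Fin 2) ℝ, Q.IsSymm ∧ Q.PosDef ∧ Aᵀ * Q * A = Q := by
  intro A
  have hdet : A.det = 1 := by norm_num [A, det_fin_two]
  have htrace : A.trace = -158 / 81 := by norm_num [A, trace_fin_two]
  have htrace_sq : A.trace ^ 2 < 4 * A.det := by rw [hdet, htrace]; norm_num
  have h10 : A 1 0 < 0 := by norm_num [A]
  refine ⟨hdet, htrace, by linarith, not_exists_mulVec_eq_smul_of_trace_sq_lt htrace_sq,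
    -invariantForm A, (invariantForm_isSymm A).neg, posDef_neg_invariantForm h10 htrace_sq, ?_⟩
  rw [Matrix.mul_neg, Matrix.neg_mul, transpose_mul_invariantForm_mul, hdet, one_smul]
end

section
/- Let A be the real 2×2 matrix A = (1/81)·[[−83, 28], [−12, −75]]. Then for every integer n ≥ 1, Aⁿ ≠ I (the identity matrix). (Indeed A is conjugate to a rotation by an angle θ with cos θ = −79/81, and since −79/81 ∉ {0, ±1/2, ±1}, θ is an irrational multiple of π.) -/
open Matrix

/-- The integer matrix `81·A`. -/
def Bmat : Matrix (Fin 2) (Fin 2) ℤ := !![-83, 28; -12, -75]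

lemma Bmat_pow_int (n : ℕ) (hn : 1 ≤ n) :
    Bmat ^ n ≠ (81 : ℤ) ^ n • (1 : Matrix (Fin 2) (Fin 2) ℤ) := by
  intro h
  -- reduce mod 3
  have h3 := congrArg ((Int.castRingHom (ZMod 3)).mapMatrix) h
  rw [map_pow] at h3
  have hC : (Int.castRingHom (ZMod 3)).mapMatrix Bmat = !![1, 1; 0, 0] := by
    ext i j
    fin_cases i <;> fin_cases j <;> simp [Bmat] <;> decide
  have hmul : (!![1, 1; 0, 0] : Matrix (Fin 2) (Fin 2) (ZMod 3)) * !![1, 1; 0, 0]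
      = !![1, 1; 0, 0] := by decide
  have hCpow : ∀ m : ℕ, 1 ≤ m →
      (!![1, 1; 0, 0] : Matrix (Fin 2) (Fin 2) (ZMod 3)) ^ m = !![1, 1; 0, 0] := by
    intro m hm
    induction m with
    | zero => omega
    | succ k ih =>
      rcases Nat.lt_or_ge k 1 with h1 | h1
      · obtain rfl : k = 0 := by omega
        simp
      · rw [pow_succ, ih h1, hmul]
  have hrhs : (Int.castRingHom (ZMod 3)).mapMatrix
      ((81 : ℤ) ^ n • (1 : Matrix (Fin 2) (Fin 2) ℤ)) = 0 := by
    ext i j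
    simp only [RingHom.mapMatrix_apply, Matrix.map_apply, Matrix.smul_apply,
      Matrix.one_apply, smul_eq_mul, Matrix.zero_apply]
    split <;> push_cast <;>
      simp [show ((81 : ℤ) : ZMod 3) = 0 from by decide, zero_pow (by omega : n ≠ 0)]
    all_goals exact ⟨by decide, by omega⟩
  rw [hC, hCpow n hn, hrhs] at h3
  exact absurd h3 (by decide)

/-- For the matrix `A = (1/81)·[[-83, 28], [-12, -75]]` (the linear part of the first
return map of the billiard beam `(abcd)^∞` in the regular tetrahedron, conjugate to a
rotation by an angle `θ` with `cos θ = -79/81`, an irrational multiple of `π`), no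
positive power of `A` is the identity. -/
theorem return_map_matrix_aperiodic :
    let A : Matrix (Fin 2) (Fin 2) ℝ := (1 / 81 : ℝ) • !![-83, 28; -12, -75]
    ∀ n : ℕ, 1 ≤ n → A ^ n ≠ 1 := by
  intro A n hn h
  set M : Matrix (Fin 2) (Fin 2) ℝ := (Int.castRingHom ℝ).mapMatrix Bmat with hM
  have hmap : M = !![-83, 28; -12, -75] := by
    ext i j
    fin_cases i <;> fin_cases j <;> simp [hM, Bmat]
  have hA : A ^ n = (1 / 81 : ℝ) ^ n • M ^ n := by
    rw [hmap]; exact smul_pow _ _ n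
  rw [hA] at h
  have key : (81 : ℝ) ^ n * (1 / 81 : ℝ) ^ n = 1 := by
    rw [← mul_pow]; norm_num
  have h2 : M ^ n = (81 : ℝ) ^ n • (1 : Matrix (Fin 2) (Fin 2) ℝ) := by
    calc M ^ n = ((81 : ℝ) ^ n * (1 / 81 : ℝ) ^ n) • M ^ n := by rw [key, one_smul]
      _ = (81 : ℝ) ^ n • ((1 / 81 : ℝ) ^ n • M ^ n) := by rw [smul_smul]
      _ = (81 : ℝ) ^ n • 1 := by rw [h]
  have h3 : (Bmat ^ n).map (Int.cast : ℤ → ℝ)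
      = ((81 : ℤ) ^ n • (1 : Matrix (Fin 2) (Fin 2) ℤ)).map (Int.cast : ℤ → ℝ) := by
    have : (Bmat ^ n).map (Int.cast : ℤ → ℝ) = M ^ n := by
      rw [hM, ← map_pow, RingHom.mapMatrix_apply]; rfl
    rw [this, h2]
    ext i j
    simp only [Matrix.map_apply, Matrix.smul_apply, Matrix.one_apply, smul_eq_mul]
    split <;> push_cast <;> ring
  have hBn : Bmat ^ n = (81 : ℤ) ^ n • (1 : Matrix (Fin 2) (Fin 2) ℤ) :=
    Matrix.map_injective Int.cast_injective h3
  exact Bmat_pow_int n hn hBn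
end

section
/- Let A be the real 2×2 matrix A = (1/81)·[[−83, 28], [−12, −75]] and let B ∈ ℝ² be any vector. Then the affine map f : ℝ² → ℝ², f(V) = A·V + B, has a unique fixed point p, and for every integer n ≥ 1 the only solution V ∈ ℝ² of fⁿ(V) = V is V = p. In particular, every point of ℝ² other than p has an infinite, non-periodic orbit under f. -/
open Matrix

namespace RMaux

noncomputable def Nmat : Matrix (Fin 2) (Fin 2) ℝ := !![-4, 28; -12, 4]

def pq : ℕ → ℤ × ℤ
  | 0 => (1, 0)
  | n+1 => (-79 * (pq n).1 - 320 * (pq n).2, (pq n).1 - 79 * (pq n).2)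

lemma pq_mod3 : ∀ n, 1 ≤ n → ((pq n).1 : ZMod 3) = 2 ∧ ((pq n).2 : ZMod 3) = 1 := by
  intro n hn
  induction n with
  | zero => omega
  | succ k ih =>
    cases k with
    | zero =>
      constructor
      · show ((-79 * (pq 0).1 - 320 * (pq 0).2 : ℤ) : ZMod 3) = 2
        simp only [pq]; push_cast; decide
      · show (((pq 0).1 - 79 * (pq 0).2 : ℤ) : ZMod 3) = 1
        simp only [pq]; push_cast; decide
    | succ m =>
      obtain ⟨h1, h2⟩ := ih (by omega)
      constructor
      · show ((-79 * (pq (m+1)).1 - 320 * (pq (m+1)).2 : ℤ) : ZMod 3) = 2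
        push_cast
        rw [h1, h2]; decide
      · show (((pq (m+1)).1 - 79 * (pq (m+1)).2 : ℤ) : ZMod 3) = 1
        push_cast
        rw [h1, h2]; decide

lemma hNN : Nmat * Nmat = (-320 : ℝ) • 1 := by
  ext i j
  fin_cases i <;> fin_cases j <;>
    simp [Nmat, Matrix.mul_apply, Fin.sum_univ_succ, Matrix.one_apply] <;> norm_num

lemma hmul (p q : ℝ) :
    ((p • (1 : Matrix (Fin 2) (Fin 2) ℝ) + q • Nmat) * ((-79 : ℝ) • 1 + Nmat)) =
      (-79 * p - 320 * q) • 1 + (p - 79 * q) • Nmat := by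
  simp only [add_mul, mul_add, Matrix.smul_mul, Matrix.mul_smul, one_mul, mul_one, hNN,
    smul_smul]
  module

lemma key (pp qq : ℤ) (c : ℝ) (w : Fin 2 → ℝ) (hw : w ≠ 0)
    (h : (pp : ℝ) • w + (qq : ℝ) • Nmat.mulVec w = c • w) : qq = 0 := by
  set x := w 0 with hx
  set y := w 1 with hy
  have e0 : (pp : ℝ) * x + (qq : ℝ) * (-4 * x + 28 * y) = c * x := by
    have := congrFun h 0
    simpa [Nmat, Matrix.mulVec, dotProduct, Fin.sum_univ_succ, ← hx, ← hy] using this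
  have e1 : (pp : ℝ) * y + (qq : ℝ) * (-12 * x + 4 * y) = c * y := by
    have := congrFun h 1
    simpa [Nmat, Matrix.mulVec, dotProduct, Fin.sum_univ_succ, ← hx, ← hy] using this
  by_contra hq
  have hqr : (qq : ℝ) ≠ 0 := by exact_mod_cast hq
  have hquad : (qq : ℝ) * (-12 * x ^ 2 + 8 * x * y - 28 * y ^ 2) = 0 := by
    linear_combination x * e1 - y * e0
  have hzero : -12 * x ^ 2 + 8 * x * y - 28 * y ^ 2 = 0 := by
    rcases mul_eq_zero.mp hquad with h | h
    · exact absurd h hqr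
    · exact h
  have hx0 : x = 0 ∧ y = 0 := by
    constructor <;> nlinarith [sq_nonneg (x - y), sq_nonneg x, sq_nonneg y]
  apply hw
  funext i
  fin_cases i
  · exact hx0.1
  · exact hx0.2

end RMaux

open RMaux in
/-- Let `A = (1/81)·[[-83, 28], [-12, -75]]` and let `B ∈ ℝ²`.  The affine map
`f V = A · V + B` (the first return map of the billiard in the regular tetrahedron to
the face `a` along the coding `(abcd)^∞`) has a unique fixed point `p`, and for every
`n ≥ 1` the only solution of `fⁿ V = V` is `V = p`; in particular every point other
than `p` has an infinite, non-periodic orbit under `f`. -/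
theorem return_map_unique_periodic_point (B : Fin 2 → ℝ) :
    let A : Matrix (Fin 2) (Fin 2) ℝ := (1 / 81 : ℝ) • !![-83, 28; -12, -75]
    let f : (Fin 2 → ℝ) → (Fin 2 → ℝ) := fun V => A.mulVec V + B
    ∃ p : Fin 2 → ℝ, f p = p ∧ (∀ q, f q = q → q = p) ∧
      ∀ n : ℕ, 1 ≤ n → ∀ V, f^[n] V = V ↔ V = p := by
  intro A f
  have hA : A = (1 / 81 : ℝ) • ((-79 : ℝ) • 1 + Nmat) := by
    show ((1 / 81 : ℝ) • !![(-83:ℝ), 28; -12, -75]) = _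
    ext i j
    fin_cases i <;> fin_cases j <;> simp [Nmat, Matrix.one_apply] <;> norm_num
  have hpow : ∀ n : ℕ, A ^ n =
      ((1:ℝ)/81)^n • (((pq n).1 : ℝ) • 1 + ((pq n).2 : ℝ) • Nmat) := by
    intro n
    induction n with
    | zero => simp [pq]
    | succ k ih =>
      rw [pow_succ, ih, hA, smul_mul_smul_comm, hmul]
      show _ = ((1:ℝ)/81)^(k+1) •
        (((-79 * (pq k).1 - 320 * (pq k).2 : ℤ) : ℝ) • 1 +
          (((pq k).1 - 79 * (pq k).2 : ℤ) : ℝ) • Nmat)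
      push_cast
      rw [pow_succ]
      try module
  -- the fixed point
  set p : Fin 2 → ℝ := (81 / 25920 : ℝ) • (!![156, 28; -12, 164]).mulVec B with hpdef
  have hp : f p = p := by
    show A.mulVec p + B = p
    funext i
    fin_cases i <;>
      · simp [A, p, Matrix.mulVec, dotProduct, Fin.sum_univ_succ]
        try ring
  have hiter : ∀ (n : ℕ) (V), f^[n] V = (A ^ n).mulVec (V - p) + p := by
    intro n
    induction n with
    | zero => intro V; simp
    | succ k ih =>
      intro V
      rw [Function.iterate_succ_apply', ih]
      show A.mulVec ((A ^ k).mulVec (V - p) + p) + B = _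
      rw [Matrix.mulVec_add, Matrix.mulVec_mulVec, ← pow_succ']
      have : A.mulVec p + B = p := hp
      rw [add_assoc, this]
  have hmain : ∀ n : ℕ, 1 ≤ n → ∀ V, f^[n] V = V ↔ V = p := by
    intro n hn V
    constructor
    · intro hV
      rw [hiter] at hV
      have hw : (A ^ n).mulVec (V - p) = V - p := eq_sub_iff_add_eq.mpr hV
      by_contra hne
      have hw0 : V - p ≠ 0 := fun h => hne (by rwa [sub_eq_zero] at h)
      set w := V - p with hwdef
      rw [hpow, Matrix.smul_mulVec, Matrix.add_mulVec, Matrix.smul_mulVec,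
        Matrix.smul_mulVec, Matrix.one_mulVec] at hw
      have h2 : ((pq n).1 : ℝ) • w + ((pq n).2 : ℝ) • Nmat.mulVec w = ((81:ℝ)^n) • w := by
        have h3 := congrArg (fun v => ((81:ℝ)^n) • v) hw
        simp only [smul_smul] at h3
        have h81 : (81:ℝ)^n * ((1:ℝ)/81)^n = 1 := by
          rw [← mul_pow]; norm_num
        rw [h81, one_smul] at h3
        exact h3
      have hq0 := key _ _ _ w hw0 h2
      have := (pq_mod3 n hn).2
      rw [hq0] at this
      exact absurd this (by decide)
    · intro h
      subst h
      exact Function.iterate_fixed hp n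
  exact ⟨p, hp, fun q hq => (hmain 1 le_rfl q).mp (by simpa using hq), hmain⟩
end
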